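/- For 0 ≤ q < 1 and 0 < q' < 1, every surjective unital *-homomorphism φ : A(S^{2n+1}_q) → A(SU_{q'}(2)) satisfies either φ(z₀) = λα + x or φ(z₀) = λα* + x, for some λ ∈ ℂ with |λ| = 1 and some x in the commutator ideal V₁ of A(SU_{q'}(2)). -/

import Mathlib

noncomputable section

namespace QAlg

/-- Generators of a free *-algebra: `inl i` is the generator `z i`, and
`inr i` is its formal adjoint `(z i)*`. -/
abbrev Gen (X : Type) := X ⊕ X

/-- The free algebra on the doubled generating set, realized as the monoid
algebra of the free monoid. -/
abbrev F (X : Type) := MonoidAlgebra ℂ (FreeMonoid (Gen X))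

/-- The *-operation on words: reverse the word and exchange the two copies
of the generators. -/
def wordStar {X : Type} (w : FreeMonoid (Gen X)) : FreeMonoid (Gen X) :=
  FreeMonoid.ofList (((FreeMonoid.toList w).map Sum.swap).reverse)

lemma wordStar_mul {X : Type} (w v : FreeMonoid (Gen X)) :
    wordStar (w * v) = wordStar v * wordStar w := by
  simp [wordStar, FreeMonoid.toList_mul, FreeMonoid.ofList_append]

lemma wordStar_wordStar {X : Type} (w : FreeMonoid (Gen X)) : wordStar (wordStar w) = w := by
  simp [wordStar, List.map_reverse, List.map_map, Sum.swap_swap_eq]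

/-- The canonical conjugate-linear antimultiplicative involution on the free
algebra `F X`, determined by `star (z i) = (z i)*` and complex conjugation
on scalars. -/
def starF {X : Type} (f : F X) : F X :=
  Finsupp.sum f.coeff fun w c => MonoidAlgebra.single (wordStar w) ((starRingEnd ℂ) c)

lemma starF_single {X : Type} (w : FreeMonoid (Gen X)) (c : ℂ) :
    starF (MonoidAlgebra.single w c) = MonoidAlgebra.single (wordStar w) ((starRingEnd ℂ) c) := by
  classical
  simp [starF]

lemma starF_zero {X : Type} : starF (0 : F X) = 0 := by simp [starF]

lemma starF_add {X : Type} (f g : F X) : starF (f + g) = starF f + starF g := by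
  classical
  unfold starF
  rw [MonoidAlgebra.coeff_add]
  refine Finsupp.sum_add_index' (fun w => by simp) (fun w c₁ c₂ => by
    simp [map_add, Finsupp.single_add])

lemma starF_single_mul {X : Type} (w : FreeMonoid (Gen X)) (c : ℂ) (g : F X) :
    starF (MonoidAlgebra.single w c * g) = starF g * starF (MonoidAlgebra.single w c) := by
  classical
  induction g using MonoidAlgebra.induction with
  | zero => simp [starF_zero]
  | single_add v d g _ _ ihg =>
    rw [mul_add, starF_add, starF_add, add_mul, ihg]
    congr 1
    rw [MonoidAlgebra.single_mul_single, starF_single, starF_single, starF_single,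
      MonoidAlgebra.single_mul_single, wordStar_mul, map_mul, mul_comm]

lemma starF_mul {X : Type} (f g : F X) : starF (f * g) = starF g * starF f := by
  classical
  induction f using MonoidAlgebra.induction with
  | zero => simp [starF_zero]
  | single_add w c f _ _ ih =>
    rw [add_mul, starF_add, starF_add, ih, mul_add, starF_single_mul]

lemma starF_starF {X : Type} (f : F X) : starF (starF f) = f := by
  classical
  induction f using MonoidAlgebra.induction with
  | zero => simp [starF_zero]
  | single_add w c f _ _ ih =>
    rw [starF_add, starF_add, ih, starF_single, starF_single, wordStar_wordStar,
      Complex.conj_conj]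

/-- The free *-algebra structure on `F X`. -/
def starRingF (X : Type) : StarRing (F X) where
  star := starF
  star_involutive := starF_starF
  star_mul := starF_mul
  star_add := starF_add

/-- The generator `z i` inside the free *-algebra. -/
def zF {X : Type} (i : X) : F X := MonoidAlgebra.of ℂ _ (FreeMonoid.of (Sum.inl i))

/-- The formal adjoint `(z i)*` inside the free *-algebra. -/
def zsF {X : Type} (i : X) : F X := MonoidAlgebra.of ℂ _ (FreeMonoid.of (Sum.inr i))

/-- The defining relations of the Vaksman-Soibelman quantum sphere
`S^{2n+1}_q` (with `zsF i` playing the role of `(z i)*`), together with their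
images under the *-operation, so that the quotient below is the universal
unital *-algebra on the generators `z 0, ..., z n` with these relations. -/
inductive srel (n : ℕ) (q : ℝ) : F (Fin (n + 1)) → F (Fin (n + 1)) → Prop
  | comm_zz {i j : Fin (n + 1)} (h : i < j) :
      srel n q (zF j * zF i) ((q : ℂ) • (zF i * zF j))
  | comm_zsz {i j : Fin (n + 1)} (h : i ≠ j) :
      srel n q (zsF i * zF j) ((q : ℂ) • (zF j * zsF i))
  | ccr (i : Fin (n + 1)) :
      srel n q (zsF i * zF i)
        (zF i * zsF i + ((1 - q ^ 2 : ℝ) : ℂ) • ∑ j ∈ Finset.Ioi i, zF j * zsF j)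
  | sphere_eq : srel n q (∑ j, zF j * zsF j) 1
  | star_rel {a b} : srel n q a b → srel n q (starF a) (starF b)

/-- The coordinate *-algebra `A(S^{2n+1}_q)` of the quantum sphere. -/
abbrev Sphere (n : ℕ) (q : ℝ) := RingQuot (srel n q)

noncomputable instance (n : ℕ) (q : ℝ) : StarRing (Sphere n q) :=
  @RingQuot.starRing _ _ (starRingF _) (srel n q) (fun _ _ h => srel.star_rel h)

/-- The generator `z i` of the quantum sphere algebra. -/
def z (n : ℕ) (q : ℝ) (i : Fin (n + 1)) : Sphere n q :=
  RingQuot.mkAlgHom ℂ (srel n q) (zF i)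

/-- The defining relations of quantum `SU(2)` (with `zF 0 = α`, `zF 1 = β`,
`zsF i` playing the role of the adjoint generators), together with their
images under the *-operation. -/
inductive surel (q : ℝ) : F (Fin 2) → F (Fin 2) → Prop
  | r1 : surel q (zF 1 * zF 0) ((q : ℂ) • (zF 0 * zF 1))
  | r2 : surel q (zsF 1 * zF 0) ((q : ℂ) • (zF 0 * zsF 1))
  | r3 : surel q (zF 1 * zsF 1) (zsF 1 * zF 1)
  | r4 : surel q (zF 0 * zsF 0 + zF 1 * zsF 1) 1
  | r5 : surel q (zsF 0 * zF 0 + ((q ^ 2 : ℝ) : ℂ) • (zF 1 * zsF 1)) 1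
  | star_rel {a b} : surel q a b → surel q (starF a) (starF b)

/-- The coordinate *-algebra `A(SU_q(2))`. -/
abbrev SU (q : ℝ) := RingQuot (surel q)

noncomputable instance (q : ℝ) : StarRing (SU q) :=
  @RingQuot.starRing _ _ (starRingF _) (surel q) (fun _ _ h => surel.star_rel h)

/-- The generator `α` of `A(SU_q(2))`. -/
def αg (q : ℝ) : SU q := RingQuot.mkAlgHom ℂ (surel q) (zF 0)

/-- The generator `β` of `A(SU_q(2))`. -/
def βg (q : ℝ) : SU q := RingQuot.mkAlgHom ℂ (surel q) (zF 1)

/-- The elements `e_{j,k,l}` of `A(SU_q(2))`: `α^j β^k (β*)^l` for `j ≥ 0`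
and `β^k (β*)^l (α*)^{-j}` for `j < 0`. -/
def e (q : ℝ) (j : ℤ) (k l : ℕ) : SU q :=
  if 0 ≤ j then αg q ^ j.toNat * βg q ^ k * star (βg q) ^ l
  else βg q ^ k * star (βg q) ^ l * star (αg q) ^ (-j).toNat

/-- The subspace `V_m ⊆ A(SU_q(2))` spanned by the `e_{j,k,l}` with `k + l ≥ m`. -/
def V (q : ℝ) (m : ℕ) : Submodule ℂ (SU q) :=
  Submodule.span ℂ {x | ∃ (j : ℤ) (k l : ℕ), m ≤ k + l ∧ x = e q j k l}
/-!
Compose `φ` with the abelianization `ab : A(SU_{q'}(2)) → ℂ[T;T⁻¹]` (`α ↦ T`, `β ↦ 0`,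
`T* = T⁻¹`) to get a surjective *-homomorphism `ψ` onto a commutative algebra. There the
relation `z₀* z₀ = z₀ z₀* + (1 - q²) ∑_{j>0} z_j z_j*` forces
`∑_{j>0} ψ(z_j) ψ(z_j)* = 0`, and since the constant coefficient of `f f*` is `∑ |f_m|²`,
all `ψ(z_j)` with `j > 0` vanish. Then `ψ(z₀)` is unitary, hence a monomial `c T^d` with
`|c| = 1`; as the image of `ψ` lies in `ℂ[T^d; T^{-d}]`, surjectivity gives `d = ±1`.
Finally `ker ab ⊆ V₁`: for `q' ≠ 0` the `e_{j,k,l}` span `A(SU_{q'}(2))`, `ab` kills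
those with `k + l ≥ 1` and sends `e_{j,0,0}` to `T^j`. Hence
`φ(z₀) - c α^{±1} ∈ ker ab ⊆ V₁`.
-/

section FreeStarAlgebra

lemma starF_zF {X : Type} (i : X) : starF (zF i) = zsF i := by
  simp [zF, zsF, MonoidAlgebra.of_apply, starF_single, wordStar]

lemma starF_zsF {X : Type} (i : X) : starF (zsF i) = zF i := by
  simp [zF, zsF, MonoidAlgebra.of_apply, starF_single, wordStar]

lemma starF_smul {X : Type} (c : ℂ) (f : F X) :
    starF (c • f) = (starRingEnd ℂ) c • starF f := by
  classical
  induction f using MonoidAlgebra.induction with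
  | zero => simp [starF_zero]
  | single_add w d f _ _ ih =>
    rw [smul_add, starF_add, starF_add, ih, smul_add, MonoidAlgebra.smul_single, starF_single,
      starF_single, MonoidAlgebra.smul_single, smul_eq_mul, smul_eq_mul, map_mul]

lemma star_mkAlgHom {X : Type} {r : F X → F X → Prop}
    (hr : ∀ ⦃a b⦄, r a b → r (starF a) (starF b)) (f : F X) :
    letI := starRingF X
    letI := RingQuot.starRing r fun _ _ h => hr h
    star (RingQuot.mkAlgHom ℂ r f) = RingQuot.mkAlgHom ℂ r (starF f) := by
  simp only [RingQuot.mkAlgHom_def, RingQuot.mkRingHom_def]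
  rfl

def gen {X : Type} (g : Gen X) : F X := MonoidAlgebra.of ℂ _ (FreeMonoid.of g)

lemma adjoin_range_gen (X : Type) : Algebra.adjoin ℂ (Set.range (gen : Gen X → F X)) = ⊤ := by
  rw [eq_top_iff]
  rintro f -
  induction f using MonoidAlgebra.induction_on with
  | of w =>
    induction w using FreeMonoid.inductionOn' with
    | one => rw [map_one]; exact Subalgebra.one_mem _
    | of_mul g w ih =>
      rw [map_mul]
      exact Subalgebra.mul_mem _ (Algebra.subset_adjoin ⟨g, rfl⟩) ih
  | add f g hf hg => exact Subalgebra.add_mem _ hf hg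
  | smul c f hf => exact Subalgebra.smul_mem _ hf c

lemma adjoin_range_mkAlgHom_comp_gen {X : Type} (r : F X → F X → Prop) :
    Algebra.adjoin ℂ (Set.range (RingQuot.mkAlgHom ℂ r ∘ gen)) = ⊤ := by
  rw [Set.range_comp, ← AlgHom.map_adjoin, adjoin_range_gen, Algebra.map_top,
    AlgHom.range_eq_top]
  exact RingQuot.mkAlgHom_surjective ℂ r

theorem Submodule.eq_top_of_one_mem_of_mul_mem {R A : Type*} [CommSemiring R] [Semiring A]
    [Algebra R A] {s : Set A} (hs : Algebra.adjoin R s = ⊤) (W : Submodule R A) (h1 : 1 ∈ W)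
    (hmul : ∀ a ∈ s, ∀ w ∈ W, a * w ∈ W) : W = ⊤ := by
  suffices h : ∀ a ∈ Algebra.adjoin R s, ∀ w ∈ W, a * w ∈ W by
    refine eq_top_iff.2 fun a _ => ?_
    simpa using h a (hs ▸ Algebra.mem_top) 1 h1
  intro a ha
  induction ha using Algebra.adjoin_induction with
  | mem a ha => exact hmul a ha
  | algebraMap c => intro w hw; simpa [Algebra.algebraMap_eq_smul_one] using W.smul_mem c hw
  | add a b _ _ ha hb => intro w hw; rw [add_mul]; exact W.add_mem (ha w hw) (hb w hw)
  | mul a b _ _ ha hb => intro w hw; rw [mul_assoc]; exact ha _ (hb w hw)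

end FreeStarAlgebra

section SphereRelations

variable {n : ℕ} {q : ℝ}

lemma mkAlgHom_zF (i : Fin (n + 1)) : RingQuot.mkAlgHom ℂ (srel n q) (zF i) = z n q i := rfl

lemma mkAlgHom_zsF (i : Fin (n + 1)) :
    RingQuot.mkAlgHom ℂ (srel n q) (zsF i) = star (z n q i) := by
  rw [z, ← starF_zF]
  exact (star_mkAlgHom (fun _ _ h => srel.star_rel h) _).symm

lemma sum_z_mul_star_z : ∑ j, z n q j * star (z n q j) = 1 := by
  simpa only [map_sum, map_mul, map_one, mkAlgHom_zF, mkAlgHom_zsF] using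
    RingQuot.mkAlgHom_rel ℂ (srel.sphere_eq (n := n) (q := q))

lemma star_z_mul_z (i : Fin (n + 1)) :
    star (z n q i) * z n q i = z n q i * star (z n q i)
      + ((1 - q ^ 2 : ℝ) : ℂ) • ∑ j ∈ Finset.Ioi i, z n q j * star (z n q j) := by
  simpa only [map_sum, map_mul, map_add, map_smul, mkAlgHom_zF, mkAlgHom_zsF] using
    RingQuot.mkAlgHom_rel ℂ (srel.ccr (n := n) (q := q) i)

end SphereRelations

section SkewCommute

variable {K R : Type*} [CommSemiring K] [Semiring R] [Algebra K R] {c : K} {x y : R}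

lemma mul_pow_eq_smul_of_mul_eq_smul (h : y * x = c • (x * y)) (m : ℕ) :
    y * x ^ m = c ^ m • (x ^ m * y) := by
  induction m with
  | zero => simp
  | succ m ih =>
    rw [pow_succ, ← mul_assoc, ih, smul_mul_assoc, mul_assoc, h, mul_smul_comm, smul_smul,
      ← pow_succ, ← mul_assoc]

lemma pow_mul_eq_smul_of_mul_eq_smul (h : y * x = c • (x * y)) (m : ℕ) :
    y ^ m * x = c ^ m • (x * y ^ m) := by
  induction m with
  | zero => simp
  | succ m ih =>
    rw [pow_succ, mul_assoc, h, mul_smul_comm, ← mul_assoc, ih, smul_mul_assoc, smul_smul,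
      ← pow_succ', mul_assoc]

end SkewCommute

section SURelations

variable (q : ℝ)

local notation "α" => αg q
local notation "β" => βg q

lemma star_αg : star α = RingQuot.mkAlgHom ℂ (surel q) (zsF 0) := by
  rw [αg, ← starF_zF]
  exact star_mkAlgHom (fun _ _ h => surel.star_rel h) _

lemma star_βg : star β = RingQuot.mkAlgHom ℂ (surel q) (zsF 1) := by
  rw [βg, ← starF_zF]
  exact star_mkAlgHom (fun _ _ h => surel.star_rel h) _

lemma βg_mul_αg : β * α = (q : ℂ) • (α * β) := by
  simpa only [map_mul, map_smul, αg, βg] using RingQuot.mkAlgHom_rel ℂ (surel.r1 (q := q))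

lemma star_βg_mul_αg : star β * α = (q : ℂ) • (α * star β) := by
  rw [star_βg]
  simpa only [map_mul, map_smul, αg] using RingQuot.mkAlgHom_rel ℂ (surel.r2 (q := q))

lemma commute_βg_star : Commute β (star β) := by
  rw [star_βg, βg, Commute, SemiconjBy]
  simpa only [map_mul] using RingQuot.mkAlgHom_rel ℂ (surel.r3 (q := q))

lemma αg_mul_star_αg : α * star α = 1 - β * star β := by
  rw [eq_sub_iff_add_eq, star_αg, star_βg]
  simpa only [map_mul, map_add, map_one, αg, βg] using
    RingQuot.mkAlgHom_rel ℂ (surel.r4 (q := q))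

lemma star_αg_mul_αg : star α * α = 1 - (q : ℂ) ^ 2 • (β * star β) := by
  rw [eq_sub_iff_add_eq, star_αg, star_βg]
  simpa only [map_mul, map_smul, map_add, map_one, Complex.ofReal_pow, αg, βg] using
    RingQuot.mkAlgHom_rel ℂ (surel.r5 (q := q))

lemma star_αg_mul_βg : star α * β = (q : ℂ) • (β * star α) := by
  simpa only [starF_mul, starF_smul, starF_zF, starF_zsF, Complex.conj_ofReal, map_mul, map_smul,
    star_αg, βg] using
    RingQuot.mkAlgHom_rel ℂ (surel.star_rel (surel.r2 (q := q)))

lemma star_αg_mul_star_βg : star α * star β = (q : ℂ) • (star β * star α) := by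
  simpa only [starF_mul, starF_smul, starF_zF, starF_zsF, Complex.conj_ofReal, map_mul, map_smul,
    star_αg, star_βg] using
    RingQuot.mkAlgHom_rel ℂ (surel.star_rel (surel.r1 (q := q)))

end SURelations

section ActionOnE

variable (q : ℝ)

local notation "α" => αg q
local notation "β" => βg q

lemma e_of_nonneg {j : ℤ} (hj : 0 ≤ j) (k l : ℕ) :
    e q j k l = α ^ j.toNat * β ^ k * star β ^ l := by
  rw [e, if_pos hj]

lemma e_of_nonpos {j : ℤ} (hj : j ≤ 0) (k l : ℕ) :
    e q j k l = β ^ k * star β ^ l * star α ^ (-j).toNat := by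
  rcases hj.lt_or_eq with hj | rfl
  · rw [e, if_neg hj.not_ge]
  · simp [e]

lemma βg_pow_mul_star_βg_pow_mul_αg (k l : ℕ) :
    β ^ k * star β ^ l * α = (q : ℂ) ^ (k + l) • (α * (β ^ k * star β ^ l)) := by
  rw [mul_assoc, pow_mul_eq_smul_of_mul_eq_smul (star_βg_mul_αg q), mul_smul_comm, ← mul_assoc,
    pow_mul_eq_smul_of_mul_eq_smul (βg_mul_αg q), smul_mul_assoc, smul_smul, ← pow_add,
    mul_assoc, add_comm l]

lemma star_αg_mul_βg_pow_mul_star_βg_pow (k l : ℕ) :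
    star α * (β ^ k * star β ^ l)
      = (q : ℂ) ^ (k + l) • (β ^ k * star β ^ l * star α) := by
  rw [← mul_assoc, mul_pow_eq_smul_of_mul_eq_smul (star_αg_mul_βg q), smul_mul_assoc, mul_assoc,
    mul_pow_eq_smul_of_mul_eq_smul (star_αg_mul_star_βg q), mul_smul_comm, smul_smul, ← pow_add,
    mul_assoc]

lemma βg_mul_star_βg_mul_αg_pow (t : ℕ) :
    β * star β * α ^ t = (q : ℂ) ^ (2 * t) • (α ^ t * (β * star β)) := by
  rw [mul_assoc, mul_pow_eq_smul_of_mul_eq_smul (star_βg_mul_αg q), mul_smul_comm, ← mul_assoc,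
    mul_pow_eq_smul_of_mul_eq_smul (βg_mul_αg q), smul_mul_assoc, smul_smul, ← pow_add,
    mul_assoc, two_mul]

lemma βg_pow_mul_star_βg_pow_mul_βg_mul_star_βg (k l : ℕ) :
    β ^ k * star β ^ l * (β * star β) = β ^ (k + 1) * star β ^ (l + 1) := by
  rw [mul_assoc (β ^ k), ← mul_assoc (star β ^ l), ((commute_βg_star q).symm.pow_left l).eq,
    mul_assoc β, ← mul_assoc (β ^ k), ← pow_succ, ← pow_succ]

lemma βg_mul_e (j : ℤ) (k l : ℕ) :
    β * e q j k l = (q : ℂ) ^ j.toNat • e q j (k + 1) l := by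
  rcases le_or_gt 0 j with hj | hj
  · rw [e_of_nonneg q hj, e_of_nonneg q hj, ← mul_assoc, ← mul_assoc,
      mul_pow_eq_smul_of_mul_eq_smul (βg_mul_αg q), smul_mul_assoc, smul_mul_assoc,
      mul_assoc _ β, ← pow_succ']
  · rw [e_of_nonpos q hj.le, e_of_nonpos q hj.le, Int.toNat_of_nonpos hj.le, pow_zero, one_smul,
      ← mul_assoc, ← mul_assoc, ← pow_succ']

lemma star_βg_mul_e (j : ℤ) (k l : ℕ) :
    star β * e q j k l = (q : ℂ) ^ j.toNat • e q j k (l + 1) := by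
  have hβ : star β * β ^ k * star β ^ l = β ^ k * star β ^ (l + 1) := by
    rw [((commute_βg_star q).symm.pow_right k).eq, mul_assoc, ← pow_succ']
  rcases le_or_gt 0 j with hj | hj
  · rw [e_of_nonneg q hj, e_of_nonneg q hj, ← mul_assoc, ← mul_assoc,
      mul_pow_eq_smul_of_mul_eq_smul (star_βg_mul_αg q), smul_mul_assoc, smul_mul_assoc,
      mul_assoc _ (star β), mul_assoc, hβ, mul_assoc]
  · rw [e_of_nonpos q hj.le, e_of_nonpos q hj.le, Int.toNat_of_nonpos hj.le, pow_zero, one_smul,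
      ← mul_assoc, ← mul_assoc, hβ]

lemma αg_mul_e_of_nonneg {j : ℤ} (hj : 0 ≤ j) (k l : ℕ) :
    α * e q j k l = e q (j + 1) k l := by
  rw [e_of_nonneg q hj, e_of_nonneg q (by omega), show (j + 1).toNat = j.toNat + 1 by omega,
    ← mul_assoc, ← mul_assoc, ← pow_succ']

lemma αg_mul_e_of_neg {j : ℤ} (hj : j < 0) (k l : ℕ) :
    (q : ℂ) ^ (k + l) • (α * e q j k l) = e q (j + 1) k l - e q (j + 1) (k + 1) (l + 1) := by
  obtain ⟨t, ht⟩ : ∃ t, (-j).toNat = t + 1 := ⟨(-j).toNat - 1, by omega⟩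
  rw [e_of_nonpos q hj.le, e_of_nonpos q (by omega), e_of_nonpos q (by omega),
    show (-(j + 1)).toNat = t by omega, ht, ← mul_assoc, ← smul_mul_assoc,
    ← βg_pow_mul_star_βg_pow_mul_αg, mul_assoc, pow_succ', ← mul_assoc α, αg_mul_star_αg,
    sub_mul, one_mul, mul_sub, ← mul_assoc _ (β * star β),
    βg_pow_mul_star_βg_pow_mul_βg_mul_star_βg]

lemma star_αg_mul_e_of_nonpos {j : ℤ} (hj : j ≤ 0) (k l : ℕ) :
    star α * e q j k l = (q : ℂ) ^ (k + l) • e q (j - 1) k l := by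
  rw [e_of_nonpos q hj, e_of_nonpos q (by omega), show (-(j - 1)).toNat = (-j).toNat + 1 by omega,
    ← mul_assoc, star_αg_mul_βg_pow_mul_star_βg_pow, smul_mul_assoc, mul_assoc, ← pow_succ']

lemma star_αg_mul_e_of_pos {j : ℤ} (hj : 0 < j) (k l : ℕ) :
    star α * e q j k l
      = e q (j - 1) k l - (q : ℂ) ^ (2 * j.toNat) • e q (j - 1) (k + 1) (l + 1) := by
  obtain ⟨t, ht⟩ : ∃ t, j.toNat = t + 1 := ⟨j.toNat - 1, by omega⟩
  have hβ : β * star β * β ^ k = β ^ (k + 1) * star β := by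
    rw [mul_assoc, ((commute_βg_star q).symm.pow_right k).eq, ← mul_assoc, ← pow_succ']
  rw [e_of_nonneg q hj.le, e_of_nonneg q (by omega), e_of_nonneg q (by omega),
    show (j - 1).toNat = t by omega, ht, ← mul_assoc, ← mul_assoc, pow_succ', ← mul_assoc,
    star_αg_mul_αg, sub_mul, one_mul, sub_mul, sub_mul, smul_mul_assoc, smul_mul_assoc,
    smul_mul_assoc, βg_mul_star_βg_mul_αg_pow, smul_mul_assoc, smul_mul_assoc, smul_smul,
    ← pow_add, show 2 + 2 * t = 2 * (t + 1) by ring, mul_assoc (α ^ t), mul_assoc (α ^ t),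
    hβ, mul_assoc (α ^ t) (β ^ (k + 1) * star β), mul_assoc (β ^ (k + 1)), ← pow_succ',
    mul_assoc (α ^ t) (β ^ (k + 1)) (star β ^ (l + 1))]

end ActionOnE

section Spanning

variable (q : ℝ)

lemma e_mem_V (j : ℤ) {k l m : ℕ} (h : m ≤ k + l) : e q j k l ∈ V q m :=
  Submodule.subset_span ⟨j, k, l, h, rfl⟩

lemma mul_mem_V_of_forall_e {m : ℕ} {g x : SU q}
    (hg : ∀ j k l, m ≤ k + l → g * e q j k l ∈ V q m) (hx : x ∈ V q m) :
    g * x ∈ V q m :=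
  (Submodule.span_le (p := (V q m).comap (LinearMap.mulLeft ℂ g))).2
    (by rintro _ ⟨j, k, l, hkl, rfl⟩; exact hg j k l hkl) hx

lemma αg_mul_e_mem_V_zero (hq : q ≠ 0) (j : ℤ) (k l : ℕ) : αg q * e q j k l ∈ V q 0 := by
  rcases le_or_gt 0 j with hj | hj
  · rw [αg_mul_e_of_nonneg q hj]
    exact e_mem_V q _ (Nat.zero_le _)
  · rw [← Submodule.smul_mem_iff _ (pow_ne_zero (k + l) (Complex.ofReal_ne_zero.2 hq)),
      αg_mul_e_of_neg q hj]
    exact sub_mem (e_mem_V q _ (Nat.zero_le _)) (e_mem_V q _ (Nat.zero_le _))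

lemma star_αg_mul_e_mem_V_zero (j : ℤ) (k l : ℕ) : star (αg q) * e q j k l ∈ V q 0 := by
  rcases le_or_gt j 0 with hj | hj
  · rw [star_αg_mul_e_of_nonpos q hj]
    exact Submodule.smul_mem _ _ (e_mem_V q _ (Nat.zero_le _))
  · rw [star_αg_mul_e_of_pos q hj]
    exact sub_mem (e_mem_V q _ (Nat.zero_le _))
      (Submodule.smul_mem _ _ (e_mem_V q _ (Nat.zero_le _)))

theorem V_zero_eq_top (hq : q ≠ 0) : V q 0 = ⊤ := by
  refine Submodule.eq_top_of_one_mem_of_mul_mem (adjoin_range_mkAlgHom_comp_gen (surel q)) _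
    (by simpa [e] using e_mem_V q 0 (le_refl (0 + 0))) ?_
  rintro _ ⟨i | i, rfl⟩ x hx <;> fin_cases i <;>
    refine mul_mem_V_of_forall_e q (fun j k l _ => ?_) hx
  · exact αg_mul_e_mem_V_zero q hq j k l
  · change βg q * _ ∈ _
    rw [βg_mul_e]
    exact Submodule.smul_mem _ _ (e_mem_V q _ (Nat.zero_le _))
  · change RingQuot.mkAlgHom ℂ (surel q) (zsF 0) * _ ∈ _
    rw [← star_αg]
    exact star_αg_mul_e_mem_V_zero q j k l
  · change RingQuot.mkAlgHom ℂ (surel q) (zsF 1) * _ ∈ _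
    rw [← star_βg, star_βg_mul_e]
    exact Submodule.smul_mem _ _ (e_mem_V q _ (Nat.zero_le _))

end Spanning

open LaurentPolynomial

section Laurent

def conjInvert : ℂ[T;T⁻¹] →+* ℂ[T;T⁻¹] :=
  (AddMonoidAlgebra.mapRingHom ℤ (starRingEnd ℂ)).comp invert.toRingEquiv.toRingHom

lemma coeff_conjInvert (f : ℂ[T;T⁻¹]) (m : ℤ) :
    (conjInvert f).coeff m = starRingEnd ℂ (f.coeff (-m)) := by
  simp [conjInvert]

lemma conjInvert_T (m : ℤ) : conjInvert (T m) = T (-m) := by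
  ext n
  simp only [coeff_conjInvert, T_apply]
  split_ifs <;> simp_all [neg_eq_iff_eq_neg]

lemma conjInvert_smul (c : ℂ) (f : ℂ[T;T⁻¹]) :
    conjInvert (c • f) = starRingEnd ℂ c • conjInvert f := by
  ext
  simp [coeff_conjInvert]

lemma coeff_mul_conjInvert_zero (f : ℂ[T;T⁻¹]) :
    (f * conjInvert f).coeff 0
      = ((∑ m ∈ f.coeff.support, Complex.normSq (f.coeff m) : ℝ) : ℂ) := by
  simp [AddMonoidAlgebra.coeff_mul_apply_left, coeff_conjInvert, Finsupp.sum, Complex.mul_conj]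

lemma eq_zero_of_sum_mul_conjInvert_eq_zero {ι : Type*} {s : Finset ι} {v : ι → ℂ[T;T⁻¹]}
    (h : ∑ i ∈ s, v i * conjInvert (v i) = 0) {i : ι} (hi : i ∈ s) : v i = 0 := by
  have hsum : ∑ i ∈ s, ∑ m ∈ (v i).coeff.support, Complex.normSq ((v i).coeff m) = 0 := by
    have h0 := congrArg (fun f => f.coeff 0) h
    simp only [AddMonoidAlgebra.coeff_sum, Finset.sum_apply', coeff_mul_conjInvert_zero,
      AddMonoidAlgebra.coeff_zero, Finsupp.coe_zero, Pi.zero_apply] at h0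
    exact_mod_cast h0
  have hi0 := (Finset.sum_eq_zero_iff_of_nonneg fun i _ =>
    Finset.sum_nonneg fun m _ => Complex.normSq_nonneg _).1 hsum i hi
  refine AddMonoidAlgebra.coeff_eq_zero.1 (Finsupp.support_eq_empty.1 ?_)
  refine Finset.eq_empty_of_forall_notMem fun m hm => Finsupp.mem_support_iff.1 hm ?_
  exact Complex.normSq_eq_zero.1
    ((Finset.sum_eq_zero_iff_of_nonneg fun m _ => Complex.normSq_nonneg _).1 hi0 m hm)

lemma exists_eq_smul_T_of_mul_conjInvert_eq_one {f : ℂ[T;T⁻¹]} (h : f * conjInvert f = 1) :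
    ∃ (c : ℂ) (d : ℤ), ‖c‖ = 1 ∧ f = c • T d := by
  classical
  have hs : f.coeff.support.Nonempty := by
    refine Finsupp.support_nonempty_iff.2 fun h0 => ?_
    rw [AddMonoidAlgebra.coeff_eq_zero.1 h0, zero_mul] at h
    exact zero_ne_one h
  set d := f.coeff.support.max' hs
  set e := f.coeff.support.min' hs
  -- the product of the top coefficient of `f` and the bottom one of `f*` survives in `f f*`
  have hu : UniqueAdd f.coeff.support (conjInvert f).coeff.support d (-e) := by
    intro a b ha hb _
    have hb' : e ≤ -b := Finset.min'_le _ _ <| by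
      simpa [coeff_conjInvert] using Finsupp.mem_support_iff.1 hb
    have := Finset.le_max' _ _ ha
    constructor <;> omega
  have hcoeff := AddMonoidAlgebra.coeff_mul_add_of_uniqueAdd hu
  rw [h, coeff_conjInvert, neg_neg] at hcoeff
  have hde : d = e := by
    by_contra hne
    rw [← T_zero, T_apply, if_neg (by omega)] at hcoeff
    exact mul_ne_zero (Finsupp.mem_support_iff.1 (f.coeff.support.max'_mem hs))
      ((map_ne_zero _).2 (Finsupp.mem_support_iff.1 (f.coeff.support.min'_mem hs))) hcoeff.symm
  have hsupp : f.coeff.support ⊆ {d} := fun a ha => by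
    have := Finset.le_max' _ _ ha
    have := Finset.min'_le _ _ ha
    rw [Finset.mem_singleton]
    omega
  rw [← hde, add_neg_cancel, ← T_zero, T_apply, if_pos rfl, Complex.mul_conj] at hcoeff
  refine ⟨f.coeff d, d, ?_, ?_⟩
  · have hn : Complex.normSq (f.coeff d) = 1 := by exact_mod_cast hcoeff.symm
    rwa [Complex.normSq_eq_norm_sq, pow_eq_one_iff_of_nonneg (norm_nonneg _) two_ne_zero] at hn
  · rw [T, AddMonoidAlgebra.smul_single', mul_one]
    exact AddMonoidAlgebra.coeff_injective (Finsupp.eq_single_iff.2 ⟨hsupp, rfl⟩)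

def multiplesSubalgebra (d : ℤ) : Subalgebra ℂ ℂ[T;T⁻¹] :=
  (AddMonoidAlgebra.mapDomainAlgHom ℂ ℂ (AddMonoidHom.mulLeft d)).range

lemma smul_T_mem_multiplesSubalgebra (d : ℤ) (a : ℂ) (m : ℤ) :
    a • T (d * m) ∈ multiplesSubalgebra d :=
  (AlgHom.mem_range _).2 ⟨a • T m, by
    rw [map_smul, AddMonoidAlgebra.mapDomainAlgHom_apply, T, AddMonoidAlgebra.mapDomain_single]
    rfl⟩

lemma dvd_one_of_T_one_mem_multiplesSubalgebra {d : ℤ} (h : T 1 ∈ multiplesSubalgebra d) :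
    d ∣ 1 := by
  obtain ⟨g, hg⟩ := (AlgHom.mem_range _).1 h
  have hg' : AddMonoidAlgebra.mapDomain (d * ·) g = T 1 := hg
  have h1 : (1 : ℤ) ∈ (AddMonoidAlgebra.mapDomain (d * ·) g).coeff.support := by
    simp [hg']
  obtain ⟨m, -, hm⟩ := Finset.mem_image.1 (Finsupp.mapDomain_support h1)
  exact ⟨m, hm.symm⟩

end Laurent

section Abelianization

def abGen : Gen (Fin 2) → ℂ[T;T⁻¹] := Sum.elim ![T 1, 0] ![T (-1), 0]

lemma conjInvert_abGen (g : Gen (Fin 2)) : conjInvert (abGen g) = abGen g.swap := by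
  rcases g with i | i <;> fin_cases i <;> simp [abGen, conjInvert_T]

def abFree : F (Fin 2) →ₐ[ℂ] ℂ[T;T⁻¹] :=
  MonoidAlgebra.lift ℂ ℂ[T;T⁻¹] (FreeMonoid (Gen (Fin 2))) (FreeMonoid.lift abGen)

lemma conjInvert_lift_abGen (w : FreeMonoid (Gen (Fin 2))) :
    conjInvert (FreeMonoid.lift abGen w) = FreeMonoid.lift abGen (wordStar w) := by
  induction w using FreeMonoid.inductionOn' with
  | one => simp [wordStar]
  | of_mul g w ih =>
    rw [map_mul, map_mul, ih, wordStar_mul, map_mul, mul_comm]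
    simp [wordStar, conjInvert_abGen]

lemma abFree_starF (f : F (Fin 2)) : abFree (starF f) = conjInvert (abFree f) := by
  classical
  induction f using MonoidAlgebra.induction with
  | zero => simp [starF_zero]
  | single_add w c f _ _ ih =>
    rw [starF_add, map_add, map_add, map_add, ih, starF_single]
    simp [abFree, MonoidAlgebra.lift_single, conjInvert_smul, conjInvert_lift_abGen]

lemma abFree_zF (i : Fin 2) : abFree (zF i) = ![T 1, 0] i := by
  simp [abFree, zF, abGen]

lemma abFree_zsF (i : Fin 2) : abFree (zsF i) = ![T (-1), 0] i := by
  simp [abFree, zsF, abGen]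

lemma abFree_eq_of_surel (q : ℝ) {a b : F (Fin 2)} (h : surel q a b) : abFree a = abFree b := by
  induction h with
  | star_rel _ ih => rw [abFree_starF, abFree_starF, ih]
  | _ =>
    simp only [map_mul, map_smul, map_add, map_one, abFree_zF, abFree_zsF, Matrix.cons_val_zero,
      Matrix.cons_val_one, mul_zero, zero_mul, add_zero, smul_zero, ← T_add, add_neg_cancel,
      neg_add_cancel, T_zero]

def ab (q : ℝ) : SU q →ₐ[ℂ] ℂ[T;T⁻¹] :=
  RingQuot.liftAlgHom ℂ ⟨abFree, fun _ _ h => abFree_eq_of_surel q h⟩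

variable (q : ℝ)

lemma ab_mkAlgHom (f : F (Fin 2)) : ab q (RingQuot.mkAlgHom ℂ (surel q) f) = abFree f :=
  RingQuot.liftAlgHom_mkAlgHom_apply _ _ _ _

lemma ab_star (x : SU q) : ab q (star x) = conjInvert (ab q x) := by
  obtain ⟨f, rfl⟩ := RingQuot.mkAlgHom_surjective ℂ (surel q) x
  rw [star_mkAlgHom (fun _ _ h => surel.star_rel h), ab_mkAlgHom, ab_mkAlgHom, abFree_starF]

lemma ab_αg : ab q (αg q) = T 1 := by simp [αg, ab_mkAlgHom, abFree_zF]

lemma ab_βg : ab q (βg q) = 0 := by simp [βg, ab_mkAlgHom, abFree_zF]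

lemma ab_star_αg : ab q (star (αg q)) = T (-1) := by rw [ab_star, ab_αg, conjInvert_T]

lemma ab_e_of_one_le (j : ℤ) {k l : ℕ} (h : 1 ≤ k + l) : ab q (e q j k l) = 0 := by
  have hβ : ab q (βg q ^ k * star (βg q) ^ l) = 0 := by
    rcases Nat.eq_zero_or_pos k with rfl | hk
    · rw [map_mul, map_pow, map_pow, ab_star, ab_βg, map_zero, zero_pow (n := l) (by omega),
        mul_zero]
    · rw [map_mul, map_pow, ab_βg, zero_pow hk.ne', zero_mul]
  rcases le_or_gt 0 j with hj | hj
  · rw [e_of_nonneg q hj, mul_assoc, map_mul, hβ, mul_zero]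
  · rw [e_of_nonpos q hj.le, map_mul, hβ, zero_mul]

lemma ab_e_zero_zero (j : ℤ) : ab q (e q j 0 0) = T j := by
  rcases le_or_gt 0 j with hj | hj
  · rw [e_of_nonneg q hj, pow_zero, pow_zero, mul_one, mul_one, map_pow, ab_αg, T_pow]
    congr 1
    omega
  · rw [e_of_nonpos q hj.le, pow_zero, pow_zero, one_mul, one_mul, map_pow, ab_star_αg, T_pow]
    congr 1
    omega

lemma V_one_le_ker_ab : V q 1 ≤ LinearMap.ker (ab q).toLinearMap :=
  Submodule.span_le.2 fun _ ⟨j, _, _, h, hx⟩ => hx ▸ ab_e_of_one_le q j h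

def abSection : ℂ[T;T⁻¹] →ₗ[ℂ] SU q :=
  (AddMonoidAlgebra.basis ℤ ℂ).constr ℂ fun j => e q j 0 0

lemma abSection_T (j : ℤ) : abSection q (T j) = e q j 0 0 :=
  (AddMonoidAlgebra.basis ℤ ℂ).constr_basis ℂ _ j

lemma ab_abSection (f : ℂ[T;T⁻¹]) : ab q (abSection q f) = f := by
  have : (ab q).toLinearMap ∘ₗ abSection q = LinearMap.id :=
    (AddMonoidAlgebra.basis ℤ ℂ).ext fun j =>
      (congrArg (ab q) (abSection_T q j)).trans (ab_e_zero_zero q j)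
  exact LinearMap.congr_fun this f

lemma ab_surjective : Function.Surjective (ab q) := fun f => ⟨abSection q f, ab_abSection q f⟩

lemma V_zero_le_range_abSection_sup_V_one : V q 0 ≤ LinearMap.range (abSection q) ⊔ V q 1 := by
  refine Submodule.span_le.2 fun _ ⟨j, k, l, _, hx⟩ => hx ▸ ?_
  rcases Nat.eq_zero_or_pos (k + l) with hkl | hkl
  · obtain ⟨rfl, rfl⟩ : k = 0 ∧ l = 0 := by omega
    exact Submodule.mem_sup_left ⟨T j, abSection_T q j⟩
  · exact Submodule.mem_sup_right (e_mem_V q j hkl)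

theorem mem_V_one_of_ab_eq_zero (hq : q ≠ 0) {x : SU q} (hx : ab q x = 0) : x ∈ V q 1 := by
  have hx0 : x ∈ V q 0 := V_zero_eq_top q hq ▸ Submodule.mem_top
  obtain ⟨_, ⟨f, rfl⟩, v, hv, rfl⟩ :=
    Submodule.mem_sup.1 (V_zero_le_range_abSection_sup_V_one q hx0)
  have hf : f = 0 := by
    simpa [ab_abSection, show ab q v = 0 from V_one_le_ker_ab q hv] using hx
  simpa [hf] using hv

end Abelianization

section SphereToLaurent

variable {n : ℕ} {q : ℝ} (ψ : Sphere n q →ₐ[ℂ] ℂ[T;T⁻¹])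

lemma apply_z_eq_zero_of_ne_zero (hψ : ∀ x, ψ (star x) = conjInvert (ψ x)) (hq : q ^ 2 ≠ 1)
    {j : Fin (n + 1)} (hj : j ≠ 0) : ψ (z n q j) = 0 := by
  have h := congrArg ψ (star_z_mul_z (n := n) (q := q) 0)
  simp only [map_add, map_mul, map_smul, map_sum, hψ, mul_comm (conjInvert _), left_eq_add,
    smul_eq_zero, Complex.ofReal_eq_zero, sub_eq_zero] at h
  exact eq_zero_of_sum_mul_conjInvert_eq_zero (h.resolve_left (Ne.symm hq))
    (Finset.mem_Ioi.2 (Fin.pos_iff_ne_zero.2 hj))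

lemma apply_z_zero_mul_conjInvert (hψ : ∀ x, ψ (star x) = conjInvert (ψ x))
    (hq : q ^ 2 ≠ 1) :
    ψ (z n q 0) * conjInvert (ψ (z n q 0)) = 1 := by
  have h := congrArg ψ (sum_z_mul_star_z (n := n) (q := q))
  rwa [map_sum, map_one, Fintype.sum_eq_single 0 fun j hj => by
    rw [map_mul, hψ, apply_z_eq_zero_of_ne_zero ψ hψ hq hj, zero_mul], map_mul, hψ] at h

lemma range_le_multiplesSubalgebra (hψ : ∀ x, ψ (star x) = conjInvert (ψ x))
    {c : ℂ} {d : ℤ} (h0 : ψ (z n q 0) = c • T d) (hj : ∀ j ≠ 0, ψ (z n q j) = 0) :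
    ψ.range ≤ multiplesSubalgebra d := by
  rw [← Algebra.map_top, ← adjoin_range_mkAlgHom_comp_gen, AlgHom.map_adjoin,
    Algebra.adjoin_le_iff]
  rintro _ ⟨_, ⟨i | i, rfl⟩, rfl⟩
  · change ψ (z n q i) ∈ _
    rcases eq_or_ne i 0 with rfl | hi
    · simpa [h0] using smul_T_mem_multiplesSubalgebra d c 1
    · simp [hj i hi]
  · change ψ (RingQuot.mkAlgHom ℂ (srel n q) (zsF i)) ∈ _
    rw [mkAlgHom_zsF, hψ]
    rcases eq_or_ne i 0 with rfl | hi
    · simpa [h0, conjInvert_smul, conjInvert_T] using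
        smul_T_mem_multiplesSubalgebra d ((starRingEnd ℂ) c) (-1)
    · simp [hj i hi]

end SphereToLaurent

theorem surjective_hom_apply_z_zero_general (n : ℕ) (q q' : ℝ)
    (hq0 : 0 ≤ q) (hq1 : q < 1) (hq'0 : 0 < q')
    (φ : Sphere n q →⋆ₐ[ℂ] SU q') (hφ : Function.Surjective φ) :
    ∃ (l : ℂ) (x : SU q'), ‖l‖ = 1 ∧ x ∈ V q' 1 ∧
      (φ (z n q 0) = l • αg q' + x ∨ φ (z n q 0) = l • star (αg q') + x) := by
  set ψ := (ab q').comp φ.toAlgHom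
  have hψ (x : Sphere n q) : ψ (star x) = conjInvert (ψ x) := by simp [ψ, map_star, ab_star]
  have hq : q ^ 2 ≠ 1 := by nlinarith
  obtain ⟨c, d, hc, hd⟩ :=
    exists_eq_smul_T_of_mul_conjInvert_eq_one (apply_z_zero_mul_conjInvert ψ hψ hq)
  have hd1 : d ∣ 1 := dvd_one_of_T_one_mem_multiplesSubalgebra <|
    range_le_multiplesSubalgebra ψ hψ hd (fun j hj => apply_z_eq_zero_of_ne_zero ψ hψ hq hj)
      ((AlgHom.mem_range _).2 ((ab_surjective q').comp hφ (T 1)))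
  have hV {a : SU q'} (ha : ab q' a = T d) : φ (z n q 0) - c • a ∈ V q' 1 :=
    mem_V_one_of_ab_eq_zero q' hq'0.ne' <| by
      rw [map_sub, map_smul, ha, ← hd]
      simp [ψ]
  rcases Int.isUnit_iff.1 (isUnit_of_dvd_one hd1) with rfl | rfl
  · exact ⟨c, _, hc, hV (ab_αg q'), Or.inl (add_sub_cancel _ _).symm⟩
  · exact ⟨c, _, hc, hV (ab_star_αg q'), Or.inr (add_sub_cancel _ _).symm⟩

/-- For `0 ≤ q < 1` and `0 < q' < 1`, every surjective unital
*-homomorphism `φ : A(S^{2n+1}_q) → A(SU_{q'}(2))` satisfies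
`φ(z 0) = λ α + x` or `φ(z 0) = λ α* + x` with `|λ| = 1` and `x ∈ V₁`. -/
theorem surjective_hom_apply_z_zero (n : ℕ) (hn : 1 ≤ n) (q q' : ℝ)
    (hq0 : 0 ≤ q) (hq1 : q < 1) (hq'0 : 0 < q') (hq'1 : q' < 1)
    (φ : Sphere n q →⋆ₐ[ℂ] SU q') (hφ : Function.Surjective φ) :
    ∃ (l : ℂ) (x : SU q'), ‖l‖ = 1 ∧ x ∈ V q' 1 ∧
      (φ (z n q 0) = l • αg q' + x ∨ φ (z n q 0) = l • star (αg q') + x) :=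
  surjective_hom_apply_z_zero_general n q q' hq0 hq1 hq'0 φ hφ

end QAlg
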